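/- Partition the nine distinguished submodules into the three triples T1 = {R(t,e), R(f,e), R(s,e)}, T2 = {R(e,u), R(e,v), R(e,w)}, T3 = {R(e,t), R(e,f), R(e,s)}. Then any two submodules belonging to different triples intersect in exactly 4 vectors, while any two distinct submodules belonging to the same triple intersect in exactly 8 vectors. -/

import Mathlib

open Matrix

/-- The matrix m(a,b,c,d) = [[a,c,d],[0,b,0],[0,0,b]] over GF(2). -/
def m (a b c d : ZMod 2) : Matrix (Fin 3) (Fin 3) (ZMod 2) :=
  !![a, c, d; 0, b, 0; 0, 0, b]

lemma m_mul (a b c d a' b' c' d' : ZMod 2) :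
    m a b c d * m a' b' c' d' =
      m (a * a') (b * b') (a * c' + c * b') (a * d' + d * b') := by
  ext i j
  fin_cases i <;> fin_cases j <;>
    simp [m, Matrix.mul_apply, Fin.sum_univ_three, Matrix.vecHead, Matrix.vecTail]

/-- The ring R, as a subring of the 3×3 matrices over GF(2). -/
def Rring : Subring (Matrix (Fin 3) (Fin 3) (ZMod 2)) where
  carrier := {A | ∃ a b c d : ZMod 2, A = m a b c d}
  zero_mem' := ⟨0, 0, 0, 0, by ext i j; fin_cases i <;> fin_cases j <;> simp [m, Matrix.vecHead, Matrix.vecTail]⟩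
  one_mem' := ⟨1, 1, 0, 0, by ext i j; fin_cases i <;> fin_cases j <;> simp [m, Matrix.one_apply, Matrix.vecHead, Matrix.vecTail]⟩
  add_mem' := by
    rintro A B ⟨a, b, c, d, rfl⟩ ⟨a', b', c', d', rfl⟩
    exact ⟨a + a', b + b', c + c', d + d',
      by ext i j; fin_cases i <;> fin_cases j <;> simp [m, Matrix.vecHead, Matrix.vecTail]⟩
  neg_mem' := by
    rintro A ⟨a, b, c, d, rfl⟩
    exact ⟨-a, -b, -c, -d,
      by ext i j; fin_cases i <;> fin_cases j <;> simp [m, Matrix.vecHead, Matrix.vecTail]⟩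
  mul_mem' := by
    rintro A B ⟨a, b, c, d, rfl⟩ ⟨a', b', c', d', rfl⟩
    exact ⟨a * a', b * b', a * c' + c * b', a * d' + d * b', m_mul a b c d a' b' c' d'⟩

lemma m_mem (a b c d : ZMod 2) : m a b c d ∈ Rring := ⟨a, b, c, d, rfl⟩

/-- The element m(a,b,c,d) viewed as an element of the ring R. -/
def mm (a b c d : ZMod 2) : Rring := ⟨m a b c d, m_mem a b c d⟩

/-- The cyclic left submodule R(x,y) = {(αx, αy) : α ∈ R} of R², as a set of vectors. -/
def RM (x y : Rring) : Set (Rring × Rring) := {p | ∃ α : Rring, p = (α * x, α * y)}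

def t : Rring := mm 0 0 1 0
def f : Rring := mm 0 0 1 1
def s : Rring := mm 0 0 0 1
def e : Rring := mm 0 1 0 0
def u : Rring := mm 0 1 1 0
def v : Rring := mm 0 1 1 1
def w : Rring := mm 0 1 0 1

/-- The nine distinguished generators. -/
def gens : List (Rring × Rring) :=
  [(t, e), (f, e), (s, e), (e, u), (e, v), (e, w), (e, s), (e, f), (e, t)]

/-- The first triple of distinguished generators. -/
def T1 : List (Rring × Rring) := [(t, e), (f, e), (s, e)]
/-- The second triple of distinguished generators. -/
def T2 : List (Rring × Rring) := [(e, u), (e, v), (e, w)]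
/-- The third triple of distinguished generators. -/
def T3 : List (Rring × Rring) := [(e, t), (e, f), (e, s)]

/-!
Every element of R is m(a,b,c,d), and m(a,b,c,d) · m(0,β,γ,δ) = m(0, bβ, aγ + cβ, aδ + dβ).
Hence, for (γ,δ) ≠ 0, R(m(0,β,γ,δ), e) consists of the pairs (m(0,b₁,c₁,d₁), m(0,b₂,c₂,d₂))
with b₁ = β b₂ and (c₁ - β c₂, d₁ - β d₂) on the line through (γ,δ): in the 6-dimensional
GF(2)-space of such pairs, each of the nine modules is cut out by two linear equations.
Those of T1 are b₁ = 0 together with a line condition on (c₁,d₁), those of T3 the same with the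
two coordinates exchanged, and those of T2 are b₁ = b₂ together with a line condition on
(c₁ + c₂, d₁ + d₂). Two modules of one triple share their first equation, so they meet in a
3-dimensional space; for modules of different triples the four equations are independent.
-/

lemma exists_mul_eq_of_mul_eq_mul {K : Type*} [Field K] {γ δ x y : K} (hγδ : γ ≠ 0 ∨ δ ≠ 0)
    (h : δ * x = γ * y) : ∃ a, a * γ = x ∧ a * δ = y := by
  rcases hγδ with hγ | hδ
  · refine ⟨x / γ, div_mul_cancel₀ x hγ, ?_⟩
    field_simp
    linear_combination h
  · refine ⟨y / δ, ?_, div_mul_cancel₀ y hδ⟩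
    field_simp
    linear_combination -h

lemma mm_mul (a b c d a' b' c' d' : ZMod 2) :
    mm a b c d * mm a' b' c' d' = mm (a * a') (b * b') (a * c' + c * b') (a * d' + d * b') :=
  Subtype.ext (m_mul a b c d a' b' c' d')

lemma Rring.exists_eq_mm (α : Rring) : ∃ a b c d, α = mm a b c d := by
  obtain ⟨A, a, b, c, d, rfl⟩ := α
  exact ⟨a, b, c, d, rfl⟩

lemma mm_inj {a b c d a' b' c' d' : ZMod 2} :
    mm a b c d = mm a' b' c' d' ↔ a = a' ∧ b = b' ∧ c = c' ∧ d = d' := by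
  refine ⟨fun h => ?_, by rintro ⟨rfl, rfl, rfl, rfl⟩; rfl⟩
  have h' := congrArg Subtype.val h
  exact ⟨congrFun₂ h' 0 0, congrFun₂ h' 1 1, congrFun₂ h' 0 1, congrFun₂ h' 0 2⟩

lemma exists_mul_mm_zero_eq (α : Rring) (β γ δ : ZMod 2) :
    ∃ b c d, α * mm 0 β γ δ = mm 0 b c d := by
  obtain ⟨a, b, c, d, rfl⟩ := Rring.exists_eq_mm α
  exact ⟨b * β, a * γ + c * β, a * δ + d * β, by rw [mm_mul, mul_zero]⟩

lemma exists_mul_eq_mm_iff {β γ δ : ZMod 2} (hγδ : γ ≠ 0 ∨ δ ≠ 0) (b₁ c₁ d₁ b₂ c₂ d₂ : ZMod 2) :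
    (∃ α : Rring, α * mm 0 β γ δ = mm 0 b₁ c₁ d₁ ∧ α * e = mm 0 b₂ c₂ d₂) ↔
      b₁ = β * b₂ ∧ δ * (c₁ - β * c₂) = γ * (d₁ - β * d₂) := by
  constructor
  · rintro ⟨α, h₁, h₂⟩
    obtain ⟨a, b, c, d, rfl⟩ := Rring.exists_eq_mm α
    simp only [e, mm_mul, mm_inj] at h₁ h₂
    obtain ⟨-, rfl, rfl, rfl⟩ := h₂
    obtain ⟨-, rfl, rfl, rfl⟩ := h₁
    constructor <;> ring
  · rintro ⟨hb, hcd⟩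
    obtain ⟨a, ha₁, ha₂⟩ := exists_mul_eq_of_mul_eq_mul hγδ hcd
    refine ⟨mm a b₂ c₂ d₂, ?_, by simp [e, mm_mul]⟩
    simp only [mm_mul, mm_inj]
    exact ⟨by ring, by rw [hb]; ring, by linear_combination ha₁, by linear_combination ha₂⟩

def coordPair (q : Fin 6 → ZMod 2) : Rring × Rring :=
  (mm 0 (q 0) (q 1) (q 2), mm 0 (q 3) (q 4) (q 5))

lemma coordPair_injective : Function.Injective coordPair := by
  intro q q' h
  simp only [coordPair, Prod.mk.injEq, mm_inj] at h
  ext i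
  fin_cases i <;> simp [h]

lemma RM_mm_mm (β γ δ β' γ' δ' : ZMod 2) :
    RM (mm 0 β γ δ) (mm 0 β' γ' δ') = coordPair '' {q | ∃ α : Rring,
      α * mm 0 β γ δ = mm 0 (q 0) (q 1) (q 2) ∧ α * mm 0 β' γ' δ' = mm 0 (q 3) (q 4) (q 5)} := by
  ext p
  constructor
  · rintro ⟨α, rfl⟩
    obtain ⟨b₁, c₁, d₁, h₁⟩ := exists_mul_mm_zero_eq α β γ δ
    obtain ⟨b₂, c₂, d₂, h₂⟩ := exists_mul_mm_zero_eq α β' γ' δ'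
    exact ⟨![b₁, c₁, d₁, b₂, c₂, d₂], ⟨α, h₁, h₂⟩, by simp [coordPair, h₁, h₂]⟩
  · rintro ⟨q, ⟨α, h₁, h₂⟩, rfl⟩
    exact ⟨α, by rw [h₁, h₂, coordPair]⟩

lemma RM_mm_e {β γ δ : ZMod 2} (hγδ : γ ≠ 0 ∨ δ ≠ 0) :
    RM (mm 0 β γ δ) e =
      coordPair '' {q | q 0 = β * q 3 ∧ δ * (q 1 - β * q 4) = γ * (q 2 - β * q 5)} := by
  rw [e, RM_mm_mm]
  exact congrArg _ (Set.ext fun q => exists_mul_eq_mm_iff hγδ _ _ _ _ _ _)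

lemma RM_e_mm {β γ δ : ZMod 2} (hγδ : γ ≠ 0 ∨ δ ≠ 0) :
    RM e (mm 0 β γ δ) =
      coordPair '' {q | q 3 = β * q 0 ∧ δ * (q 4 - β * q 1) = γ * (q 5 - β * q 2)} := by
  rw [e, RM_mm_mm]
  exact congrArg _ (Set.ext fun q =>
    (exists_congr fun _ => and_comm).trans (exists_mul_eq_mm_iff hγδ _ _ _ _ _ _))

lemma ncard_image_coordPair_inter (S T : Set (Fin 6 → ZMod 2)) :
    (coordPair '' S ∩ coordPair '' T).ncard = (S ∩ T).ncard := by
  rw [← Set.image_inter coordPair_injective, Set.ncard_image_of_injective _ coordPair_injective]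

set_option maxHeartbeats 400000 in
/-- Any two distinguished submodules belonging to different triples intersect in exactly
4 vectors, while any two distinct distinguished submodules belonging to the same triple
intersect in exactly 8 vectors. -/
theorem intersection_cardinalities :
    (∀ g ∈ T1, ∀ h ∈ T2, (RM g.1 g.2 ∩ RM h.1 h.2).ncard = 4) ∧
    (∀ g ∈ T1, ∀ h ∈ T3, (RM g.1 g.2 ∩ RM h.1 h.2).ncard = 4) ∧
    (∀ g ∈ T2, ∀ h ∈ T3, (RM g.1 g.2 ∩ RM h.1 h.2).ncard = 4) ∧
    (∀ g ∈ T1, ∀ h ∈ T1, RM g.1 g.2 ≠ RM h.1 h.2 → (RM g.1 g.2 ∩ RM h.1 h.2).ncard = 8) ∧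
    (∀ g ∈ T2, ∀ h ∈ T2, RM g.1 g.2 ≠ RM h.1 h.2 → (RM g.1 g.2 ∩ RM h.1 h.2).ncard = 8) ∧
    (∀ g ∈ T3, ∀ h ∈ T3, RM g.1 g.2 ≠ RM h.1 h.2 → (RM g.1 g.2 ∩ RM h.1 h.2).ncard = 8) := by
  refine ⟨?_, ?_, ?_, ?_, ?_, ?_⟩ <;> intro g hg h hh <;> fin_cases hg <;> fin_cases hh
  all_goals
    try intro hne
    first
    | exact absurd rfl hne
    | simp only [t, f, s, u, v, w, RM_mm_e, RM_e_mm, ne_eq, one_ne_zero, not_false_eq_true,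
        true_or, or_true, ncard_image_coordPair_inter]
      rw [Set.ncard_eq_toFinset_card']
      decide
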